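/- For every S ⊆ C_s(G,X) and every W ⊆ G × X, the star-construction S*W is second countable and Hausdorff. -/

import Mathlib

open Set Filter Topology TopologicalSpace

namespace Yorke

/-- The space `X̂ = X ∪ {ω}`, encoded as `Option X` with `ω = none`.  Its open sets are
`X̂` itself together with the open sets of `X`. -/
instance hatTopology (X : Type*) [TopologicalSpace X] : TopologicalSpace (Option X) :=
  TopologicalSpace.generateFrom
    ({Set.univ} ∪ {s : Set (Option X) | ∃ u : Set X, IsOpen u ∧ s = (Option.some : X → Option X) '' u})

/-- The space `C_p(G,X)` of partial maps from `G` to `X` (continuous maps defined on a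
nonempty open subset of `G`), encoded via the bijection `μ` with the subspace
`{f : C(G,X̂) | f⁻¹(X) ≠ ∅}` of `C(G,X̂)`; it carries the compact-open topology. -/
abbrev Cp (G X : Type*) [TopologicalSpace G] [TopologicalSpace X] : Type _ :=
  {f : C(G, Option X) // {g : G | f g ≠ none}.Nonempty}

variable {G X : Type*} [TopologicalSpace G] [TopologicalSpace X]

/-- The domain of a partial map. -/
def dom (φ : Cp G X) : Set G := {g : G | φ.1 g ≠ none}

/-- A partial map with nonempty connected domain is maximally defined if every partial map
with nonempty connected domain which extends it is equal to it. -/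
def MaximallyDefined (φ : Cp G X) : Prop :=
  IsConnected (dom φ) ∧
    ∀ ψ : Cp G X, IsConnected (dom ψ) → dom φ ⊆ dom ψ →
      (∀ g ∈ dom φ, φ.1 g = ψ.1 g) → φ = ψ

/-- The space `C_s(G,X)` of maximally defined partial maps, with the subspace topology. -/
abbrev Cs (G X : Type*) [TopologicalSpace G] [TopologicalSpace X] : Type _ :=
  {φ : Cp G X // MaximallyDefined φ}

/-- The orbit `O(φ) = {φ(g) : g ∈ dom φ}`. -/
def orbit (φ : Cs G X) : Set X := {x : X | ∃ g : G, φ.1.1 g = some x}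

/-- The star-construction `S*W = {(g,φ) : φ ∈ S, g ∈ dom φ, (g,φ(g)) ∈ W}`. -/
def star (S : Set (Cs G X)) (W : Set (G × X)) : Set (G × Cs G X) :=
  {p : G × Cs G X | p.2 ∈ S ∧ ∃ x : X, p.2.1.1 p.1 = some x ∧ (p.1, x) ∈ W}

/-- `S` satisfies the compactness axiom if `S*W` is compact for every compact `W`. -/
def CompactnessAxiom (S : Set (Cs G X)) : Prop :=
  ∀ W : Set (G × X), IsCompact W → IsCompact (star S W)

/-- `S` satisfies the existence axiom on `W` if `S*{(t,x)}` is nonempty for all `(t,x) ∈ W`. -/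
def ExistenceAxiom (S : Set (Cs G X)) (W : Set (G × X)) : Prop :=
  ∀ p ∈ W, (star S {p}).Nonempty

/-- `S` satisfies the uniqueness axiom on `W` if `S*{(t,x)}` is empty or a singleton. -/
def UniquenessAxiom (S : Set (Cs G X)) (W : Set (G × X)) : Prop :=
  ∀ p ∈ W, (star S {p}).Subsingleton

section GroupPart

variable {G X : Type*} [TopologicalSpace X] [Group G] [TopologicalSpace G] [IsTopologicalGroup G]

/-- The shift `σ(g,φ)`, the partial map `x ↦ φ(xg)` with domain `(dom φ)g⁻¹`. -/
def shift (g : G) (φ : Cp G X) : Cp G X :=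
  ⟨⟨fun x => φ.1 (x * g), φ.1.continuous.comp (continuous_mul_right g)⟩, by
    obtain ⟨g₀, hg₀⟩ := φ.2
    exact ⟨g₀ * g⁻¹, by simpa [inv_mul_cancel_right] using hg₀⟩⟩

/-- `S ⊆ C_s(G,X)` is `σ`-invariant if `σ(g,φ) ∈ S` for all `g ∈ G`, `φ ∈ S`. -/
def SigmaInvariant (S : Set (Cs G X)) : Prop :=
  ∀ (g : G) (φ : Cs G X), φ ∈ S → ∃ ψ : Cs G X, ψ ∈ S ∧ ψ.1 = shift g φ.1

/-- `A ⊆ X` is weakly invariant with respect to `S` if every `x ∈ A` is the value at the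
identity of some `φ ∈ S` with `O(φ) ⊆ A`. -/
def WeaklyInvariant (S : Set (Cs G X)) (A : Set X) : Prop :=
  ∀ x ∈ A, ∃ φ ∈ S, φ.1.1 (1 : G) = some x ∧ orbit φ ⊆ A

/-- `x` is an equilibrium of `S` if some `φ ∈ S` has `φ(e) = x` and `O(φ) = {x}`. -/
def Equilibrium (S : Set (Cs G X)) (x : X) : Prop :=
  ∃ φ ∈ S, φ.1.1 (1 : G) = some x ∧ orbit φ = {x}

/-- The set of motions `{π(·,x) : x ∈ X} ⊆ C_s(G,X)` of a `G`-action `π`. -/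
def actionSet (π : G × X → X) : Set (Cs G X) :=
  {φ : Cs G X | ∃ x : X, ∀ g : G, φ.1.1 g = some (π (g, x))}

end GroupPart

/-- An isomorphism `<H,k,η> : S*W → S'*W'` of star-constructions: the three maps are
homeomorphisms satisfying `ev ∘ H = k ∘ ev` and `p ∘ H = η ∘ p`. -/
structure StarIso {G X G' X' : Type*} [TopologicalSpace G] [TopologicalSpace X]
    [TopologicalSpace G'] [TopologicalSpace X']
    (S : Set (Cs G X)) (W : Set (G × X)) (S' : Set (Cs G' X')) (W' : Set (G' × X')) where
  H : ↥(star S W) ≃ₜ ↥(star S' W')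
  k : ↥W ≃ₜ ↥W'
  η : ↥S ≃ₜ ↥S'
  ev_comm : ∀ (q : ↥(star S W)) (x : X), q.1.2.1.1 q.1.1 = some x →
      ∀ hW : (q.1.1, x) ∈ W, ∀ x' : X', (H q).1.2.1.1 (H q).1.1 = some x' →
      ((k ⟨(q.1.1, x), hW⟩ : ↥W') : G' × X') = ((H q).1.1, x')
  p_comm : ∀ q : ↥(star S W), (H q).1.2 = ((η ⟨q.1.2, q.2.1⟩ : ↥S') : Cs G' X')

/-- A map `k = (τ,h) : W → W'` preserves phase space if `h(g,x)` does not depend on `g`. -/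
def PreservesPhase {G X G' X' : Type*} [TopologicalSpace G] [TopologicalSpace X]
    [TopologicalSpace G'] [TopologicalSpace X'] {W : Set (G × X)} {W' : Set (G' × X')}
    (k : ↥W → ↥W') : Prop :=
  ∀ w w' : ↥W, (w : G × X).2 = (w' : G × X).2 →
    ((k w : ↥W') : G' × X').2 = ((k w' : ↥W') : G' × X').2

/-- Two continuous maps are isotopic if they are connected by a continuous family of
homeomorphisms parametrized by `[0,1]`. -/
def Isotopic {A B : Type*} [TopologicalSpace A] [TopologicalSpace B] (f₀ f₁ : A → B) : Prop :=
  ∃ F : unitInterval × A → B, Continuous F ∧ (∀ a, F (0, a) = f₀ a) ∧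
    (∀ a, F (1, a) = f₁ a) ∧ ∀ s : unitInterval, IsHomeomorph fun a => F (s, a)

end Yorke

/-!
`S*W` is a subspace of `G × C_s(G,X)`, and `C_s(G,X)` is a subspace of `C(G,X̂)`, which is second
countable because `G` is locally compact and second countable and `X̂` is second countable.

`X̂` is not Hausdorff, so separating two points `(g,φ) ≠ (g,ψ)` of `S*W` needs maximality: if `φ`
and `ψ` agreed wherever both are defined, gluing them would give a common extension with connected
domain `dom φ ∪ dom ψ`, forcing `φ = ψ`. Hence `φ(d) = x ≠ y = ψ(d)` in `X` for some `d`, and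
evaluation at `d` separates them because `X → X̂` is an open embedding. Points with different first
coordinates are separated in `G`.
-/

namespace Yorke

section OptionTopology

variable {X Y : Type*} [TopologicalSpace X] [TopologicalSpace Y]

lemma isOpen_image_some {u : Set X} (hu : IsOpen u) : IsOpen (some '' u : Set (Option X)) :=
  isOpen_generateFrom_of_mem (Or.inr ⟨u, hu, rfl⟩)

lemma continuous_option_iff {f : Y → Option X} :
    Continuous f ↔ ∀ u : Set X, IsOpen u → IsOpen (f ⁻¹' (some '' u)) := by
  refine continuous_generateFrom_iff.trans ⟨fun h u hu => h _ (Or.inr ⟨u, hu, rfl⟩), ?_⟩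
  rintro h s (rfl | ⟨u, hu, rfl⟩)
  · exact isOpen_univ
  · exact h u hu

lemma isOpenEmbedding_some : IsOpenEmbedding (some : X → Option X) :=
  .of_continuous_injective_isOpenMap
    (continuous_option_iff.2 fun u hu => by
      rwa [preimage_image_eq _ (Option.some_injective X)])
    (Option.some_injective X) fun _ => isOpen_image_some

lemma disjoint_nhds_some [T2Space X] {a b : X} (h : a ≠ b) :
    Disjoint (𝓝 (some a)) (𝓝 (some b)) := by
  rw [← isOpenEmbedding_some.map_nhds_eq, ← isOpenEmbedding_some.map_nhds_eq,
    Filter.disjoint_map (Option.some_injective X)]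
  exact disjoint_nhds_nhds.2 h

instance [SecondCountableTopology X] : SecondCountableTopology (Option X) := by
  refine ⟨⟨insert univ (image some '' countableBasis X),
    ((countable_countableBasis X).image _).insert _, le_antisymm (le_generateFrom ?_) ?_⟩⟩
  · rintro s (rfl | ⟨B, hB, rfl⟩)
    · exact isOpen_univ
    · exact isOpen_image_some (isOpen_of_mem_countableBasis hB)
  · refine le_generateFrom ?_
    rintro s (rfl | ⟨u, hu, rfl⟩)
    · exact GenerateOpen.univ
    · rw [(isBasis_countableBasis X).open_eq_sUnion' hu, image_sUnion]
      refine GenerateOpen.sUnion _ ?_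
      rintro _ ⟨B, ⟨hB, -⟩, rfl⟩
      exact GenerateOpen.basic _ (mem_insert_of_mem _ ⟨B, hB, rfl⟩)

end OptionTopology

section PartialMaps

variable {G X : Type*} [TopologicalSpace G] [TopologicalSpace X]

lemma continuous_option_or {f₁ f₂ : G → Option X} (h₁ : Continuous f₁) (h₂ : Continuous f₂)
    (hagree : ∀ a x y, f₁ a = some x → f₂ a = some y → x = y) :
    Continuous fun a => (f₁ a).or (f₂ a) := by
  refine continuous_option_iff.2 fun u hu => ?_
  have hpre : (fun a => (f₁ a).or (f₂ a)) ⁻¹' (some '' u) =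
      f₁ ⁻¹' (some '' u) ∪ f₂ ⁻¹' (some '' u) := by
    ext a
    rcases h₁a : f₁ a with _ | x <;> rcases h₂a : f₂ a with _ | y <;>
      simp [h₁a, h₂a]
    exact fun hy => hagree a x y h₁a h₂a ▸ hy
  rw [hpre]
  exact ((isOpen_image_some hu).preimage h₁).union ((isOpen_image_some hu).preimage h₂)

theorem MaximallyDefined.eq_of_agree {φ ψ : Cp G X} (hφ : MaximallyDefined φ)
    (hψ : MaximallyDefined ψ) (hmeet : (dom φ ∩ dom ψ).Nonempty)
    (hagree : ∀ a x y, φ.1 a = some x → ψ.1 a = some y → x = y) : φ = ψ := by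
  let χ : Cp G X :=
    ⟨⟨fun a => (φ.1 a).or (ψ.1 a), continuous_option_or φ.1.2 ψ.1.2 hagree⟩,
      ⟨hmeet.some, fun h => hmeet.some_mem.1 (Option.or_eq_none_iff.1 h).1⟩⟩
  have hdom : dom χ = dom φ ∪ dom ψ := by
    ext a
    simp only [dom, mem_setOf_eq, mem_union, ne_eq, χ, ContinuousMap.coe_mk,
      Option.or_eq_none_iff, not_and_or]
  have hχ : IsConnected (dom χ) := hdom ▸ hφ.1.union hmeet hψ.1
  have hφχ : φ = χ := hφ.2 χ hχ (hdom ▸ subset_union_left) fun a ha => by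
    obtain ⟨x, hx⟩ := Option.ne_none_iff_exists'.1 ha
    simp [χ, hx]
  have hψχ : ψ = χ := hψ.2 χ hχ (hdom ▸ subset_union_right) fun a ha => by
    obtain ⟨y, hy⟩ := Option.ne_none_iff_exists'.1 ha
    cases hx : φ.1 a with
    | none => simp [χ, hx]
    | some x => simp [χ, hx, hy, hagree a x y hx hy]
  exact hφχ.trans hψχ.symm

instance [LocallyCompactSpace G] [SecondCountableTopology G] [SecondCountableTopology X] :
    SecondCountableTopology (Cs G X) :=
  have : SecondCountableTopology (Cp G X) := secondCountableTopology_induced _ _ Subtype.val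
  secondCountableTopology_induced _ _ Subtype.val

lemma exists_apply_ne_of_ne {φ ψ : Cs G X} (hne : φ ≠ ψ)
    (hmeet : (dom φ.1 ∩ dom ψ.1).Nonempty) :
    ∃ d x y, φ.1.1 d = some x ∧ ψ.1.1 d = some y ∧ x ≠ y := by
  by_contra! h
  exact hne (Subtype.ext (φ.2.eq_of_agree ψ.2 hmeet h))

theorem t2Space_star [T2Space G] [T2Space X] (S : Set (Cs G X)) (W : Set (G × X)) :
    T2Space (star S W) := by
  refine t2Space_iff_disjoint_nhds.2 fun p q hne => ?_
  obtain ⟨⟨g, φ⟩, _, x, hx, _⟩ := p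
  obtain ⟨⟨g', ψ⟩, _, y, hy, _⟩ := q
  rcases eq_or_ne g g' with rfl | hg
  · have hφψ : φ ≠ ψ := fun h => hne (by subst h; rfl)
    obtain ⟨d, a, b, ha, hb, hab⟩ := exists_apply_ne_of_ne hφψ
      ⟨g, by simp [dom, hx], by simp [dom, hy]⟩
    have hev : Continuous fun q : star S W => q.1.2.1.1 d := by fun_prop
    exact (hev.tendsto _).disjoint (ha ▸ hb ▸ disjoint_nhds_some hab) (hev.tendsto _)
  · have hfst : Continuous fun q : star S W => q.1.1 := by fun_prop
    exact (hfst.tendsto _).disjoint (disjoint_nhds_nhds.2 hg) (hfst.tendsto _)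

end PartialMaps

end Yorke

namespace Yorke

variable {G X : Type*} [Group G] [TopologicalSpace G] [IsTopologicalGroup G]
  [LocallyCompactSpace G] [SecondCountableTopology G] [T2Space G]
  [MetricSpace X] [SecondCountableTopology X]

/-- The star-construction `S*W` is second countable and Hausdorff. -/
theorem statement_3 (S : Set (Cs G X)) (W : Set (G × X)) :
    SecondCountableTopology ↥(star S W) ∧ T2Space ↥(star S W) :=
  ⟨inferInstance, t2Space_star S W⟩

end Yorke
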